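/- arXiv:1502.07164 — 8 statements merged into one kernel-verified Lean document; each statement's English description precedes it below -/
import Mathlib

section
/- Let r, s : ℝ → ℝ be smooth functions, let Ψ be the operator (Ψ y) = r y' + s y, and let n ≥ 1 be an integer. There exist smooth functions K_2, …, K_n : ℝ → ℝ such that for every smooth y : ℝ → ℝ, Ψ^n y = r^n y^{(n)} + r^{n−1} ( n s + (n(n−1)/2) r' ) y^{(n−1)} + Σ_{j=2}^{n} K_j y^{(n−j)}. That is, the coefficient of y^{(n−1)} in the n-th iterated operator is K_n^1 = r^{n−1} ( n s + C(n,2) r' ). -/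
/-- The first-order linear differential operator `Ψ[y] = r y' + s y`. -/
noncomputable def Psi (r s : ℝ → ℝ) (y : ℝ → ℝ) : ℝ → ℝ :=
  fun x => r x * deriv y x + s x * y x

private lemma cd_deriv {f : ℝ → ℝ} (h : ContDiff ℝ (⊤ : ℕ∞) f) : ContDiff ℝ (⊤ : ℕ∞) (deriv f) := by
  have h' : ContDiff ℝ (((⊤ : ℕ∞) : WithTop ℕ∞) + 1) f := h.of_le (by exact_mod_cast le_top)
  exact (contDiff_succ_iff_deriv.mp h').2.2

private lemma cd_iter {f : ℝ → ℝ} (h : ContDiff ℝ (⊤ : ℕ∞) f) (k : ℕ) :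
    ContDiff ℝ (⊤ : ℕ∞) (iteratedDeriv k f) := by
  rw [iteratedDeriv_eq_iterate]
  induction k with
  | zero => exact h
  | succ k ih => rw [Function.iterate_succ_apply']; exact cd_deriv ih

private lemma key (r s : ℝ → ℝ) (hr : ContDiff ℝ (⊤ : ℕ∞) r) (hs : ContDiff ℝ (⊤ : ℕ∞) s) (m : ℕ) :
    ∃ c : ℕ → ℝ → ℝ, (∀ k, ContDiff ℝ (⊤ : ℕ∞) (c k)) ∧
      (∀ k, m + 1 < k → c k = fun _ => 0) ∧
      (c (m + 1) = fun x => r x ^ (m + 1)) ∧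
      (c m = fun x => r x ^ m * (((m : ℝ) + 1) * s x + (((m : ℝ) + 1) * (m : ℝ) / 2) * deriv r x)) ∧
      (∀ y : ℝ → ℝ, ContDiff ℝ (⊤ : ℕ∞) y → ∀ x,
        (Psi r s)^[m + 1] y x = ∑ k ∈ Finset.range (m + 2), c k x * iteratedDeriv k y x) := by
  induction m with
  | zero =>
    refine ⟨fun k => if k = 0 then s else if k = 1 then r else fun _ => 0, ?_, ?_, ?_, ?_, ?_⟩
    · intro k; dsimp only; split_ifs; exacts [hs, hr, contDiff_const]
    · intro k hk
      simp [show k ≠ 0 by omega, show k ≠ 1 by omega]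
    · funext x; simp
    · funext x; norm_num
    · intro y hy x
      simp [Finset.sum_range_succ, Psi, iteratedDeriv_one, iteratedDeriv_zero]
      ring
  | succ m ih =>
    obtain ⟨c, hsm, hz, htop, hsub, hrep⟩ := ih
    refine ⟨fun k x =>
      r x * deriv (c k) x + s x * c k x + (if k = 0 then 0 else r x * c (k - 1) x),
      ?_, ?_, ?_, ?_, ?_⟩
    · intro k
      refine ((hr.mul (cd_deriv (hsm k))).add (hs.mul (hsm k))).add ?_
      by_cases hk : k = 0
      · simpa [hk] using (contDiff_const : ContDiff ℝ (⊤ : ℕ∞) (fun _ : ℝ => (0 : ℝ)))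
      · simpa [hk] using hr.mul (hsm (k - 1))
    · intro k hk
      funext x
      have h1 := hz k (by omega)
      have h2 := hz (k - 1) (by omega)
      simp [h1, h2, show k ≠ 0 by omega]
    · funext x
      have h1 := hz (m + 2) (by omega)
      dsimp only
      rw [show m + 1 + 1 = m + 2 from rfl, h1, show m + 2 - 1 = m + 1 from rfl, htop]
      simp
      ring
    · funext x
      have hrd : deriv (c (m + 1)) x = ((m : ℝ) + 1) * r x ^ m * deriv r x := by
        rw [htop]
        have := (((hr.differentiable (by simp)) x).hasDerivAt.fun_pow (m + 1)).deriv
        simpa using this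
      dsimp only
      rw [hrd, htop, if_neg (show m + 1 ≠ 0 by omega), show m + 1 - 1 = m from rfl, hsub]
      push_cast
      ring
    · intro y hy x
      have hg : (Psi r s)^[m + 1] y =
          fun t => ∑ k ∈ Finset.range (m + 2), c k t * iteratedDeriv k y t :=
        funext fun t => hrep y hy t
      have hdc : ∀ k, Differentiable ℝ (c k) := fun k => (hsm k).differentiable (by simp)
      have hdy : ∀ k, Differentiable ℝ (iteratedDeriv k y) := fun k =>
        (cd_iter hy k).differentiable (by simp)
      have hdiff : ∀ k ∈ Finset.range (m + 2),
          DifferentiableAt ℝ (fun t => c k t * iteratedDeriv k y t) x :=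
        fun k _ => (hdc k x).mul (hdy k x)
      have hderiv : deriv (fun t => ∑ k ∈ Finset.range (m + 2), c k t * iteratedDeriv k y t) x
          = ∑ k ∈ Finset.range (m + 2),
              (deriv (c k) x * iteratedDeriv k y x + c k x * iteratedDeriv (k + 1) y x) := by
        rw [deriv_fun_sum hdiff]
        refine Finset.sum_congr rfl fun k _ => ?_
        rw [deriv_fun_mul (hdc k x) (hdy k x), ← iteratedDeriv_succ]
      rw [Function.iterate_succ_apply', hg]
      show r x * deriv (fun t => ∑ k ∈ Finset.range (m + 2), c k t * iteratedDeriv k y t) x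
          + s x * (∑ k ∈ Finset.range (m + 2), c k x * iteratedDeriv k y x)
          = ∑ k ∈ Finset.range (m + 2 + 1),
              (r x * deriv (c k) x + s x * c k x + (if k = 0 then 0 else r x * c (k - 1) x))
                * iteratedDeriv k y x
      rw [hderiv]
      calc r x * (∑ k ∈ Finset.range (m + 2),
              (deriv (c k) x * iteratedDeriv k y x + c k x * iteratedDeriv (k + 1) y x))
          + s x * (∑ k ∈ Finset.range (m + 2), c k x * iteratedDeriv k y x)
          = ∑ k ∈ Finset.range (m + 2),
              ((r x * deriv (c k) x + s x * c k x) * iteratedDeriv k y x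
                + r x * c k x * iteratedDeriv (k + 1) y x) := by
            rw [Finset.mul_sum, Finset.mul_sum, ← Finset.sum_add_distrib]
            exact Finset.sum_congr rfl fun k _ => by ring
        _ = ∑ k ∈ Finset.range (m + 2 + 1),
              (r x * deriv (c k) x + s x * c k x + (if k = 0 then 0 else r x * c (k - 1) x))
                * iteratedDeriv k y x := by
            have hsplit : ∑ k ∈ Finset.range (m + 2 + 1),
                (r x * deriv (c k) x + s x * c k x + (if k = 0 then 0 else r x * c (k - 1) x))
                  * iteratedDeriv k y x
                = (∑ k ∈ Finset.range (m + 2 + 1),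
                    (r x * deriv (c k) x + s x * c k x) * iteratedDeriv k y x)
                  + ∑ k ∈ Finset.range (m + 2 + 1),
                    (if k = 0 then 0 else r x * c (k - 1) x) * iteratedDeriv k y x := by
              rw [← Finset.sum_add_distrib]
              exact Finset.sum_congr rfl fun k _ => by ring
            rw [hsplit, Finset.sum_range_succ
              (f := fun k => (r x * deriv (c k) x + s x * c k x) * iteratedDeriv k y x),
              Finset.sum_range_succ'
              (f := fun k => (if k = 0 then 0 else r x * c (k - 1) x) * iteratedDeriv k y x)]
            have h1 : c (m + 2) = fun _ : ℝ => (0 : ℝ) := hz _ (by omega)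
            simp only [h1]
            simp [Finset.sum_add_distrib, deriv_const', mul_comm]

/-- The coefficient of `y^{(n-1)}` in the expansion of `Ψ^n y` is
`K_n^1 = r^{n-1} (n s + C(n,2) r')`, i.e. there are smooth functions
`K_2, …, K_n` with
`Ψ^n y = r^n y^{(n)} + r^{n-1}(n s + (n(n-1)/2) r') y^{(n-1)} + Σ_{j=2}^{n} K_j y^{(n-j)}`. -/
theorem stmt1 (r s : ℝ → ℝ) (hr : ContDiff ℝ (⊤ : ℕ∞) r) (hs : ContDiff ℝ (⊤ : ℕ∞) s)
    (n : ℕ) (hn : 1 ≤ n) :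
    ∃ K : ℕ → ℝ → ℝ, (∀ j, ContDiff ℝ (⊤ : ℕ∞) (K j)) ∧
      ∀ y : ℝ → ℝ, ContDiff ℝ (⊤ : ℕ∞) y → ∀ x : ℝ,
        (Psi r s)^[n] y x =
          r x ^ n * iteratedDeriv n y x +
            r x ^ (n - 1) * ((n : ℝ) * s x + ((n : ℝ) * ((n : ℝ) - 1) / 2) * deriv r x) *
              iteratedDeriv (n - 1) y x +
            ∑ j ∈ Finset.Icc 2 n, K j x * iteratedDeriv (n - j) y x := by
  obtain ⟨m, rfl⟩ : ∃ m, n = m + 1 := ⟨n - 1, (Nat.succ_pred_eq_of_pos hn).symm⟩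
  obtain ⟨c, hsm, hz, htop, hsub, hrep⟩ := key r s hr hs m
  refine ⟨fun j => c (m + 1 - j), fun j => hsm _, fun y hy x => ?_⟩
  have hsum : ∀ f : ℕ → ℝ, ∑ k ∈ Finset.range (m + 2), f k
      = f (m + 1) + f m + ∑ j ∈ Finset.Icc 2 (m + 1), f (m + 1 - j) := by
    intro f
    have h1 : ∑ j ∈ Finset.Icc 2 (m + 1), f (m + 1 - j) = ∑ k ∈ Finset.range m, f k := by
      refine Finset.sum_nbij' (i := fun j => m + 1 - j) (j := fun k => m + 1 - k)
        ?_ ?_ ?_ ?_ ?_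
      · intro a ha; simp only [Finset.mem_Icc, Finset.mem_range] at *; omega
      · intro a ha; simp only [Finset.mem_Icc, Finset.mem_range] at *; omega
      · intro a ha; simp only [Finset.mem_Icc] at ha; omega
      · intro a ha; simp only [Finset.mem_range] at ha; omega
      · intro a _; rfl
    rw [show m + 2 = m + 1 + 1 from rfl, Finset.sum_range_succ, Finset.sum_range_succ, h1]
    ring
  rw [hrep y hy x, hsum, htop, hsub]
  rw [show m + 1 - 1 = m from rfl]
  push_cast
  ring
end

section
/- Let r, s : ℝ → ℝ be smooth functions, let Ψ be the operator (Ψ y) = r y' + s y, and let n ≥ 2 be an integer. There exist smooth functions K_3, …, K_n : ℝ → ℝ such that for every smooth y : ℝ → ℝ, Ψ^n y = r^n y^{(n)} + r^{n−1}( n s + C(n,2) r' ) y^{(n−1)} + r^{n−2} [ C(n,2)( r s' + s^2 ) + C(n,3)( 3 s r' + r r'' + ((3n−5)/4) r'^2 ) ] y^{(n−2)} + Σ_{j=3}^{n} K_j y^{(n−j)}. That is, the coefficient of y^{(n−2)} in the n-th iterated operator is K_n^2 = r^{n−2} [ C(n,2) Ψ[s] + C(n,3)( 3 s r' + r r'' +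 ((3n−5)/4) r'^2 ) ], where Ψ[s] = r s' + s^2. -/
private theorem smooth_deriv' {f : ℝ → ℝ} (hf : ContDiff ℝ (⊤ : ℕ∞) f) : ContDiff ℝ (⊤ : ℕ∞) (deriv f) := by
  have h : ContDiff ℝ (⊤ : ℕ∞) (fderiv ℝ f) := hf.fderiv_right (by simp)
  have : deriv f = fun x => fderiv ℝ f x 1 := by ext x; rfl
  rw [this]; exact h.clm_apply contDiff_const

private theorem smooth_iter' {f : ℝ → ℝ} (hf : ContDiff ℝ (⊤ : ℕ∞) f) (k : ℕ) :
    ContDiff ℝ (⊤ : ℕ∞) (iteratedDeriv k f) := by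
  induction k with
  | zero => simpa using hf
  | succ k ih => rw [iteratedDeriv_succ]; exact smooth_deriv' ih

private theorem cast_choose_three' (n : ℕ) : ((n.choose 3 : ℕ) : ℝ) = n * (n-1) * (n-2) / 6 := by
  induction n with
  | zero => simp
  | succ n ih => rw [Nat.choose_succ_succ]; push_cast [ih, Nat.cast_choose_two]; ring

private theorem sum_algebra' (N : ℕ) (rr ss : ℝ) (A d E : ℕ → ℝ) (ha : A (N+1) = 0) :
    rr * (∑ j ∈ Finset.range (N+1), (d j * E (j+1) + A j * E j)) +
      ss * (∑ j ∈ Finset.range (N+1), A j * E (j+1)) =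
    (∑ j ∈ Finset.range (N+1), (rr * A (j+1) + rr * d j + ss * A j) * E (j+1)) + rr * A 0 * E 0 := by
  have h1 : ∑ j ∈ Finset.range (N+1), rr * (A (j+1) * E (j+1)) + rr * (A 0 * E 0)
      = ∑ j ∈ Finset.range (N+1), rr * (A j * E j) := by
    rw [← Finset.sum_range_succ' (fun j => rr * (A j * E j)) (N+1),
      Finset.sum_range_succ, ha]
    simp
  simp only [Finset.mul_sum, mul_add, add_mul, Finset.sum_add_distrib, mul_assoc]
  rw [← h1]
  ring

private theorem aux_main' (r s : ℝ → ℝ) (hr : ContDiff ℝ (⊤ : ℕ∞) r) (hs : ContDiff ℝ (⊤ : ℕ∞) s) (m : ℕ) :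
    ∃ c : ℕ → ℝ → ℝ, (∀ j, ContDiff ℝ (⊤ : ℕ∞) (c j)) ∧
      (∀ x, c 0 x = r x ^ (m+2)) ∧
      (∀ x, c 1 x = r x ^ (m+1) * (((m:ℝ)+2) * s x + (((m+2).choose 2 : ℕ) : ℝ) * deriv r x)) ∧
      (∀ x, c 2 x = r x ^ m * ((((m+2).choose 2 : ℕ) : ℝ) * (r x * deriv s x + s x ^ 2) +
          (((m+2).choose 3 : ℕ) : ℝ) * (3 * s x * deriv r x + r x * iteratedDeriv 2 r x +
            ((3 * ((m:ℝ)+2) - 5) / 4) * (deriv r x) ^ 2))) ∧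
      (∀ j, m + 3 ≤ j → ∀ x, c j x = 0) ∧
      (∀ y, ContDiff ℝ (⊤ : ℕ∞) y → ∀ x, (Psi r s)^[m+2] y x =
        ∑ j ∈ Finset.range (m+3), c j x * iteratedDeriv (m+2-j) y x) := by
  have hD : ∀ (f : ℝ → ℝ), ContDiff ℝ (⊤ : ℕ∞) f → ∀ z, DifferentiableAt ℝ f z :=
    fun f hf z => (hf.differentiable (by simp)).differentiableAt
  induction m with
  | zero =>
    refine ⟨fun j => match j with
      | 0 => fun x => r x ^ 2
      | 1 => fun x => r x * (2 * s x + deriv r x)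
      | 2 => fun x => r x * deriv s x + s x ^ 2
      | (_+3) => fun _ => 0, ?_, ?_, ?_, ?_, ?_, ?_⟩
    · intro j
      match j with
      | 0 => exact hr.pow 2
      | 1 => exact hr.mul ((contDiff_const.mul hs).add (smooth_deriv' hr))
      | 2 => exact (hr.mul (smooth_deriv' hs)).add (hs.pow 2)
      | (_+3) => exact contDiff_const
    · intro x; rfl
    · intro x; norm_num
    · intro x; norm_num
    · intro j hj x
      match j, hj with
      | (_+3), _ => rfl
    · intro y hy x
      rw [show (0+2:ℕ) = 1 + 1 from rfl, Function.iterate_succ_apply', Function.iterate_one]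
      show r x * deriv (Psi r s y) x + s x * (Psi r s y) x = _
      have hPsi : Psi r s y = fun z => r z * deriv y z + s z * y z := rfl
      rw [hPsi]
      rw [deriv_fun_add ((hD r hr x).fun_mul (hD _ (smooth_deriv' hy) x)) ((hD s hs x).fun_mul (hD y hy x)),
        deriv_fun_mul (hD r hr x) (hD _ (smooth_deriv' hy) x),
        deriv_fun_mul (hD s hs x) (hD y hy x)]
      have h2 : iteratedDeriv 2 y x = deriv (deriv y) x := by
        rw [iteratedDeriv_succ, iteratedDeriv_one]
      simp only [Finset.sum_range_succ, Finset.range_one, Finset.sum_singleton]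
      norm_num [iteratedDeriv_one, iteratedDeriv_zero, h2]
      ring
  | succ m ih =>
    obtain ⟨c, hsm, h0, h1, h2, hz, hsum⟩ := ih
    refine ⟨fun j => match j with
      | 0 => fun x => r x * c 0 x
      | (j+1) => fun x => r x * c (j+1) x + r x * deriv (c j) x + s x * c j x,
      ?_, ?_, ?_, ?_, ?_, ?_⟩
    · intro j
      match j with
      | 0 => exact hr.mul (hsm 0)
      | (j+1) =>
        show ContDiff ℝ (⊤ : ℕ∞) (fun x => r x * c (j+1) x + r x * deriv (c j) x + s x * c j x)
        exact ((hr.mul (hsm (j+1))).add (hr.mul (smooth_deriv' (hsm j)))).add (hs.mul (hsm j))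
    · intro x
      show r x * c 0 x = _
      rw [h0]; ring
    · intro x
      show r x * c 1 x + r x * deriv (c 0) x + s x * c 0 x = _
      have hc0 : c 0 = fun z => r z ^ (m+2) := funext h0
      have hd0 : deriv (c 0) x = ((m:ℝ)+2) * r x ^ (m+1) * deriv r x := by
        rw [hc0, deriv_fun_pow (hD r hr x) (m+2)]
        norm_num
      rw [hd0, h1, h0, Nat.cast_choose_two, Nat.cast_choose_two]
      push_cast
      ring
    · intro x
      show r x * c 2 x + r x * deriv (c 1) x + s x * c 1 x = _
      have hc1 : c 1 = fun z => r z ^ (m+1) *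
          (((m:ℝ)+2) * s z + (((m+2).choose 2 : ℕ) : ℝ) * deriv r z) := funext h1
      have hr2 : deriv (deriv r) x = iteratedDeriv 2 r x := by
        rw [iteratedDeriv_succ, iteratedDeriv_one]
      have hd1 : deriv (c 1) x =
          (((m:ℝ)+1) * r x ^ m * deriv r x) *
            (((m:ℝ)+2) * s x + (((m+2).choose 2 : ℕ) : ℝ) * deriv r x)
          + r x ^ (m+1) *
            (((m:ℝ)+2) * deriv s x + (((m+2).choose 2 : ℕ) : ℝ) * iteratedDeriv 2 r x) := by
        rw [hc1]
        rw [deriv_fun_mul (by exact (hD r hr x).fun_pow (m+1))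
          (((hD s hs x).const_mul _).fun_add ((hD _ (smooth_deriv' hr) x).const_mul _))]
        rw [deriv_fun_pow (hD r hr x) (m+1),
          deriv_fun_add ((hD s hs x).const_mul _) ((hD _ (smooth_deriv' hr) x).const_mul _),
          deriv_const_mul _ (hD s hs x), deriv_const_mul _ (hD _ (smooth_deriv' hr) x), hr2]
        norm_num
      rw [hd1, h1, h2, Nat.cast_choose_two, Nat.cast_choose_two,
        cast_choose_three', cast_choose_three']
      push_cast
      ring
    · intro j hj x
      match j, hj with
      | (j+1), hj =>
        show r x * c (j+1) x + r x * deriv (c j) x + s x * c j x = 0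
        have hcj : c j = fun _ => (0:ℝ) := funext (hz j (by omega))
        rw [hz (j+1) (by omega), hcj]
        simp
    · intro y hy x
      have hg : (Psi r s)^[m+2] y = fun z => ∑ j ∈ Finset.range (m+3),
          c j z * iteratedDeriv (m+2-j) y z := funext fun z => hsum y hy z
      have hit : (Psi r s)^[m+1+2] y = Psi r s ((Psi r s)^[m+2] y) :=
        Function.iterate_succ_apply' (Psi r s) (m+2) y
      rw [hit]
      show r x * deriv ((Psi r s)^[m+2] y) x + s x * ((Psi r s)^[m+2] y) x = _
      rw [hg]
      rw [deriv_fun_sum (fun j _ => ((hD _ (hsm j) x).fun_mul (hD _ (smooth_iter' hy _) x)))]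
      have hterm : ∀ j ∈ Finset.range (m+3),
          deriv (fun z => c j z * iteratedDeriv (m+2-j) y z) x
            = deriv (c j) x * iteratedDeriv (m+3-(j+1)) y x
              + c j x * iteratedDeriv (m+3-j) y x := by
        intro j hj
        rw [Finset.mem_range] at hj
        rw [deriv_fun_mul (hD _ (hsm j) x) (hD _ (smooth_iter' hy _) x), ← iteratedDeriv_succ]
        have e1 : m+3-(j+1) = m+2-j := by omega
        have e2 : m+2-j+1 = m+3-j := by omega
        rw [e1, e2]
      rw [Finset.sum_congr rfl hterm]
      have hsum2 : ∑ j ∈ Finset.range (m+3), c j x * iteratedDeriv (m+2-j) y x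
          = ∑ j ∈ Finset.range (m+3), c j x * iteratedDeriv (m+3-(j+1)) y x := by
        refine Finset.sum_congr rfl fun j hj => ?_
        rw [Finset.mem_range] at hj
        congr 2
        omega
      beta_reduce
      rw [hsum2]
      have main := sum_algebra' (m+2) (r x) (s x) (fun j => c j x) (fun j => deriv (c j) x)
        (fun j => iteratedDeriv (m+3-j) y x) (hz (m+3) le_rfl x)
      beta_reduce at main
      rw [show m+2+1 = m+3 from rfl] at main
      rw [main]
      conv_rhs => rw [Finset.sum_range_succ']


/-- The coefficient of `y^{(n-2)}` in the expansion of `Ψ^n y` is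
`K_n^2 = r^{n-2} [ C(n,2) Ψ[s] + C(n,3)( 3 s r' + r r'' + ((3n-5)/4) r'^2 ) ]`,
where `Ψ[s] = r s' + s²`. -/
theorem stmt2 (r s : ℝ → ℝ) (hr : ContDiff ℝ (⊤ : ℕ∞) r) (hs : ContDiff ℝ (⊤ : ℕ∞) s)
    (n : ℕ) (hn : 2 ≤ n) :
    ∃ K : ℕ → ℝ → ℝ, (∀ j, ContDiff ℝ (⊤ : ℕ∞) (K j)) ∧
      ∀ y : ℝ → ℝ, ContDiff ℝ (⊤ : ℕ∞) y → ∀ x : ℝ,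
        (Psi r s)^[n] y x =
          r x ^ n * iteratedDeriv n y x +
            r x ^ (n - 1) * ((n : ℝ) * s x + (n.choose 2 : ℝ) * deriv r x) *
              iteratedDeriv (n - 1) y x +
            r x ^ (n - 2) *
              ((n.choose 2 : ℝ) * (r x * deriv s x + s x ^ 2) +
                (n.choose 3 : ℝ) *
                  (3 * s x * deriv r x + r x * iteratedDeriv 2 r x +
                    ((3 * (n : ℝ) - 5) / 4) * (deriv r x) ^ 2)) *
              iteratedDeriv (n - 2) y x +
            ∑ j ∈ Finset.Icc 3 n, K j x * iteratedDeriv (n - j) y x := by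
  obtain ⟨m, rfl⟩ : ∃ m, n = m + 2 := ⟨n - 2, by omega⟩
  obtain ⟨c, hsm, h0, h1, h2, hz, hsum⟩ := aux_main' r s hr hs m
  refine ⟨c, hsm, fun y hy x => ?_⟩
  rw [hsum y hy x]
  have hset : Finset.range (m+3) = insert 0 (insert 1 (insert 2 (Finset.Icc 3 (m+2)))) := by
    ext j
    simp only [Finset.mem_range, Finset.mem_insert, Finset.mem_Icc]
    omega
  rw [hset, Finset.sum_insert (by simp), Finset.sum_insert (by simp),
    Finset.sum_insert (by simp)]
  rw [h0, h1, h2]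
  rw [show m+2-1 = m+1 from rfl, show m+2-2 = m from rfl, show m+2-0 = m+2 from rfl]
  push_cast
  ring
end

section
/- Let r : ℝ → ℝ be smooth with r(x) ≠ 0 for all x, and let Ψ be the operator (Ψ y) = r y' − (1/2) r' y. Then for every smooth function y : ℝ → ℝ, Ψ² y = r² ( y'' + 𝒜(r) y ), where 𝒜(r) = ( r'^2 − 2 r r'' ) / (4 r²). In particular, the second-order iterative equation in normal form with source parameter r is y'' + 𝒜(r) y = 0. -/
/-- With `s = -(1/2) r'`, the second iterate satisfies
`Ψ² y = r² ( y'' + 𝒜(r) y )`, where `𝒜(r) = (r'² - 2 r r'') / (4 r²)`: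
the second-order iterative equation in normal form is `y'' + 𝒜(r) y = 0`. -/
theorem stmt4 (r : ℝ → ℝ) (hr : ContDiff ℝ (⊤ : ℕ∞) r) (hr0 : ∀ x, r x ≠ 0)
    (y : ℝ → ℝ) (hy : ContDiff ℝ (⊤ : ℕ∞) y) (x : ℝ) :
    (Psi r (fun t => -(1 / 2) * deriv r t))^[2] y x =
      r x ^ 2 * (iteratedDeriv 2 y x +
        (((deriv r x) ^ 2 - 2 * r x * iteratedDeriv 2 r x) / (4 * r x ^ 2)) * y x) := by
  have hr' := (contDiff_infty_iff_deriv.mp (hr.of_le (by simp))).2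
  have hy' := (contDiff_infty_iff_deriv.mp (hy.of_le (by simp))).2
  have hdr : Differentiable ℝ r := hr.differentiable (by simp)
  have hdy : Differentiable ℝ y := hy.differentiable (by simp)
  have hdr' : Differentiable ℝ (deriv r) := hr'.differentiable (by simp)
  have hdy' : Differentiable ℝ (deriv y) := hy'.differentiable (by simp)
  have key : deriv (fun x => r x * deriv y x + (fun t => -(1 / 2) * deriv r t) x * y x) x =
      deriv r x * deriv y x + r x * deriv (deriv y) x +
        (-(1/2) * deriv (deriv r) x * y x + -(1/2) * deriv r x * deriv y x) := by
    rw [deriv_fun_add ((hdr x).fun_mul (hdy' x)) (((differentiable_const _).fun_mul hdr').differentiableAt.fun_mul (hdy x)),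
        deriv_fun_mul (hdr x) (hdy' x),
        deriv_fun_mul (((differentiable_const _).fun_mul hdr') x) (hdy x),
        deriv_const_mul _ (hdr' x)]
  rw [show (Psi r (fun t => -(1 / 2) * deriv r t))^[2] y
      = Psi r (fun t => -(1 / 2) * deriv r t) (Psi r (fun t => -(1 / 2) * deriv r t) y) from rfl]
  conv_lhs => unfold Psi
  rw [key]
  rw [iteratedDeriv_succ, iteratedDeriv_succ, iteratedDeriv_zero,
      iteratedDeriv_succ, iteratedDeriv_succ, iteratedDeriv_zero]
  show r x * _ + -(1/2) * deriv r x * (r x * deriv y x + -(1/2) * deriv r x * y x) = _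
  field_simp [hr0 x]
  ring
end

section
/- Let r : ℝ → ℝ be smooth with r(x) ≠ 0 for all x, set q = 𝒜(r) = ( r'^2 − 2 r r'' ) / (4 r²), and let Ψ be the operator (Ψ y) = r y' − r' y (i.e., s = −((3−1)/2) r'). Then for every smooth function y : ℝ → ℝ, Ψ³ y = r³ ( y''' + 4 q y' + 2 q' y ). In particular, the third-order iterative equation in normal form is y''' + 4 q y' + 2 q' y = 0. -/
/-- With `q = 𝒜(r) = (r'² - 2 r r'')/(4 r²)` and `s = -r'` (the case `n = 3` of
`s = -((n-1)/2) r'`), one has `Ψ³ y = r³ ( y''' + 4 q y' + 2 q' y )`: the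
third-order iterative equation in normal form is `y''' + 4 q y' + 2 q' y = 0`. -/
theorem stmt5 (r : ℝ → ℝ) (hr : ContDiff ℝ (⊤ : ℕ∞) r) (hr0 : ∀ x, r x ≠ 0)
    (q : ℝ → ℝ)
    (hq : ∀ t, q t = ((deriv r t) ^ 2 - 2 * r t * iteratedDeriv 2 r t) / (4 * r t ^ 2))
    (y : ℝ → ℝ) (hy : ContDiff ℝ (⊤ : ℕ∞) y) (x : ℝ) :
    (Psi r (fun t => -deriv r t))^[3] y x =
      r x ^ 3 * (iteratedDeriv 3 y x + 4 * q x * deriv y x + 2 * deriv q x * y x) := by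
  have hrI : ContDiff ℝ ((⊤:ℕ∞):WithTop ℕ∞) r := hr.of_le (by simp)
  have hyI : ContDiff ℝ ((⊤:ℕ∞):WithTop ℕ∞) y := hy.of_le (by simp)
  have hone : (1:WithTop ℕ∞) ≤ ((⊤:ℕ∞):WithTop ℕ∞) := by exact_mod_cast le_top
  have key : ∀ f : ℝ → ℝ, ContDiff ℝ ((⊤:ℕ∞):WithTop ℕ∞) f →
      (∀ t, HasDerivAt f (deriv f t) t) ∧ ContDiff ℝ ((⊤:ℕ∞):WithTop ℕ∞) (deriv f) := by
    intro f hf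
    constructor
    · intro t; exact ((hf.differentiable (lt_of_lt_of_le zero_lt_one hone).ne') t).hasDerivAt
    · have := hf.iterate_deriv 1; simpa using this
  obtain ⟨hdr, hr1⟩ := key r hrI
  obtain ⟨hdr1, hr2⟩ := key _ hr1
  obtain ⟨hdr2, hr3⟩ := key _ hr2
  obtain ⟨hdy, hy1⟩ := key y hyI
  obtain ⟨hdy1, hy2⟩ := key _ hy1
  obtain ⟨hdy2, hy3⟩ := key _ hy2
  set r1 := deriv r with hr1d
  set r2 := deriv r1 with hr2d
  set r3 := deriv r2 with hr3d
  set y1 := deriv y with hy1d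
  set y2 := deriv y1 with hy2d
  set y3 := deriv y2 with hy3d
  -- iteratedDeriv facts
  have hit2 : iteratedDeriv 2 r = r2 := by
    rw [iteratedDeriv_succ, iteratedDeriv_one]
  have hit3 : iteratedDeriv 3 y = y3 := by
    rw [iteratedDeriv_succ, iteratedDeriv_succ, iteratedDeriv_one]
  -- first application
  have hP1 : Psi r (fun t => -r1 t) y = fun t => r t * y1 t - r1 t * y t := by
    funext t; simp [Psi]; ring
  have hA1 : ∀ t, HasDerivAt (fun t => r t * y1 t - r1 t * y t)
      ((r1 t * y1 t + r t * y2 t) - (r2 t * y t + r1 t * y1 t)) t := by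
    intro t
    exact ((hdr t).mul (hdy1 t)).sub ((hdr1 t).mul (hdy t))
  have hdP1 : ∀ t, deriv (Psi r (fun t => -r1 t) y) t
      = (r1 t * y1 t + r t * y2 t) - (r2 t * y t + r1 t * y1 t) := by
    intro t; rw [hP1]; exact (hA1 t).deriv
  -- second application
  have hP2 : Psi r (fun t => -r1 t) (Psi r (fun t => -r1 t) y)
      = fun t => r t * ((r1 t * y1 t + r t * y2 t) - (r2 t * y t + r1 t * y1 t))
          - r1 t * (r t * y1 t - r1 t * y t) := by
    funext t
    simp only [Psi, hdP1 t, ← hy1d]; ring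
  have hA2 : ∀ t, HasDerivAt (fun t => r t * ((r1 t * y1 t + r t * y2 t) - (r2 t * y t + r1 t * y1 t))
          - r1 t * (r t * y1 t - r1 t * y t))
      (r1 t * ((r1 t * y1 t + r t * y2 t) - (r2 t * y t + r1 t * y1 t))
        + r t * (((r2 t * y1 t + r1 t * y2 t) + (r1 t * y2 t + r t * y3 t))
            - ((r3 t * y t + r2 t * y1 t) + (r2 t * y1 t + r1 t * y2 t)))
        - (r2 t * (r t * y1 t - r1 t * y t)
            + r1 t * ((r1 t * y1 t + r t * y2 t) - (r2 t * y t + r1 t * y1 t)))) t := by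
    intro t
    have inner1 : HasDerivAt (fun t => (r1 t * y1 t + r t * y2 t) - (r2 t * y t + r1 t * y1 t))
        (((r2 t * y1 t + r1 t * y2 t) + (r1 t * y2 t + r t * y3 t))
          - ((r3 t * y t + r2 t * y1 t) + (r2 t * y1 t + r1 t * y2 t))) t :=
      (((hdr1 t).mul (hdy1 t)).add ((hdr t).mul (hdy2 t))).sub
        (((hdr2 t).mul (hdy t)).add ((hdr1 t).mul (hdy1 t)))
    have inner2 : HasDerivAt (fun t => r t * y1 t - r1 t * y t)
        ((r1 t * y1 t + r t * y2 t) - (r2 t * y t + r1 t * y1 t)) t :=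
      ((hdr t).mul (hdy1 t)).sub ((hdr1 t).mul (hdy t))
    exact ((hdr t).mul inner1).sub ((hdr1 t).mul inner2)
  have hdP2 : deriv (Psi r (fun t => -r1 t) (Psi r (fun t => -r1 t) y)) x
      = r1 x * ((r1 x * y1 x + r x * y2 x) - (r2 x * y x + r1 x * y1 x))
        + r x * (((r2 x * y1 x + r1 x * y2 x) + (r1 x * y2 x + r x * y3 x))
            - ((r3 x * y x + r2 x * y1 x) + (r2 x * y1 x + r1 x * y2 x)))
        - (r2 x * (r x * y1 x - r1 x * y x)
            + r1 x * ((r1 x * y1 x + r x * y2 x) - (r2 x * y x + r1 x * y1 x))) := by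
    rw [hP2]; exact (hA2 x).deriv
  -- derivative of q
  have hqfun : q = fun t => ((r1 t) ^ 2 - 2 * r t * r2 t) / (4 * r t ^ 2) := by
    funext t; rw [hq t, hit2]
  have hdq : HasDerivAt q
      (((2 * r1 x ^ 1 * r2 x - (2 * r1 x * r2 x + (2 * r x) * r3 x)) * (4 * r x ^ 2)
        - ((r1 x) ^ 2 - 2 * r x * r2 x) * (4 * (2 * r x ^ 1 * r1 x))) / (4 * r x ^ 2) ^ 2) x := by
    rw [hqfun]
    have hnum : HasDerivAt (fun t => (r1 t) ^ 2 - 2 * r t * r2 t)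
        (2 * r1 x ^ 1 * r2 x - (2 * r1 x * r2 x + (2 * r x) * r3 x)) x := by
      have h1 : HasDerivAt (fun t => (r1 t) ^ 2) (2 * r1 x ^ 1 * r2 x) x := by
        have := (hdr1 x).mul (hdr1 x)
        have e : (fun t => (r1 t) ^ 2) = fun t => r1 t * r1 t := by funext t; ring
        rw [e]; exact this.congr_deriv (by ring)
      have h2 : HasDerivAt (fun t => 2 * r t * r2 t) (2 * r1 x * r2 x + (2 * r x) * r3 x) x :=
        ((hdr x).const_mul 2).mul (hdr2 x)
      exact h1.sub h2
    have hden : HasDerivAt (fun t => 4 * r t ^ 2) (4 * (2 * r x ^ 1 * r1 x)) x :=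
      ((hdr x).pow 2).const_mul 4
    exact hnum.div hden (mul_ne_zero (by norm_num) (pow_ne_zero 2 (hr0 x)))
  -- put everything together
  show Psi r (fun t => -r1 t) (Psi r (fun t => -r1 t) (Psi r (fun t => -r1 t) y)) x = _
  have hP2x : Psi r (fun t => -r1 t) (Psi r (fun t => -r1 t) y) x
      = r x * ((r1 x * y1 x + r x * y2 x) - (r2 x * y x + r1 x * y1 x))
          - r1 x * (r x * y1 x - r1 x * y x) := by rw [hP2]
  simp only [Psi, hdP2, hP2x, hdq.deriv, hq x, hit2, hit3, hdP1 x, ← hy1d]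
  have h0 := hr0 x
  field_simp
  ring
end

section
/- Let r : ℝ → ℝ be smooth with r(x) ≠ 0 for all x, set q = 𝒜(r) = ( r'^2 − 2 r r'' ) / (4 r²), and let Ψ be the operator (Ψ y) = r y' − (3/2) r' y (i.e., s = −((4−1)/2) r'). Then for every smooth function y : ℝ → ℝ, Ψ⁴ y = r⁴ ( y'''' + 10 q y'' + 10 q' y' + (9 q² + 3 q'') y ). In particular, the fourth-order iterative equation in normal form is y'''' + 10 q y'' + 10 q' y' + 3 (3 q² + q'') y = 0. -/
set_option maxHeartbeats 2000000 in
/-- With `q = 𝒜(r) = (r'² - 2 r r'')/(4 r²)` and `s = -(3/2) r'` (the case `n = 4` of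
`s = -((n-1)/2) r'`), one has
`Ψ⁴ y = r⁴ ( y'''' + 10 q y'' + 10 q' y' + (9 q² + 3 q'') y )`: the fourth-order
iterative equation in normal form is `y'''' + 10 q y'' + 10 q' y' + 3(3 q² + q'') y = 0`. -/
theorem stmt6 (r : ℝ → ℝ) (hr : ContDiff ℝ (⊤ : ℕ∞) r) (hr0 : ∀ x, r x ≠ 0)
    (q : ℝ → ℝ)
    (hq : ∀ t, q t = ((deriv r t) ^ 2 - 2 * r t * iteratedDeriv 2 r t) / (4 * r t ^ 2))
    (y : ℝ → ℝ) (hy : ContDiff ℝ (⊤ : ℕ∞) y) (x : ℝ) :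
    (Psi r (fun t => -(3 / 2) * deriv r t))^[4] y x =
      r x ^ 4 * (iteratedDeriv 4 y x + 10 * q x * iteratedDeriv 2 y x
        + 10 * deriv q x * deriv y x + (9 * q x ^ 2 + 3 * iteratedDeriv 2 q x) * y x) := by
  have hri : ContDiff ℝ (⊤ : ℕ∞) r := hr.of_le (by simp)
  have hyi : ContDiff ℝ (⊤ : ℕ∞) y := hy.of_le (by simp)
  have hrd : Differentiable ℝ r := hri.differentiable (by simp)
  have hrC1 : ContDiff ℝ (⊤ : ℕ∞) (deriv r) := (contDiff_infty_iff_deriv.mp hri).2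
  have hrC2 : ContDiff ℝ (⊤ : ℕ∞) (deriv (deriv r)) := (contDiff_infty_iff_deriv.mp hrC1).2
  have hrC3 : ContDiff ℝ (⊤ : ℕ∞) (deriv (deriv (deriv r))) := (contDiff_infty_iff_deriv.mp hrC2).2
  have hrd1 : Differentiable ℝ (deriv r) := hrC1.differentiable (by simp)
  have hrd2 : Differentiable ℝ (deriv (deriv r)) := hrC2.differentiable (by simp)
  have hrd3 : Differentiable ℝ (deriv (deriv (deriv r))) := hrC3.differentiable (by simp)
  have hyd : Differentiable ℝ y := hyi.differentiable (by simp)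
  have hyC1 : ContDiff ℝ (⊤ : ℕ∞) (deriv y) := (contDiff_infty_iff_deriv.mp hyi).2
  have hyC2 : ContDiff ℝ (⊤ : ℕ∞) (deriv (deriv y)) := (contDiff_infty_iff_deriv.mp hyC1).2
  have hyC3 : ContDiff ℝ (⊤ : ℕ∞) (deriv (deriv (deriv y))) := (contDiff_infty_iff_deriv.mp hyC2).2
  have hyd1 : Differentiable ℝ (deriv y) := hyC1.differentiable (by simp)
  have hyd2 : Differentiable ℝ (deriv (deriv y)) := hyC2.differentiable (by simp)
  have hyd3 : Differentiable ℝ (deriv (deriv (deriv y))) := hyC3.differentiable (by simp)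
  have hden : ∀ t : ℝ, 4 * r t ^ 2 ≠ 0 :=
    fun t => mul_ne_zero (by norm_num) (pow_ne_zero _ (hr0 t))
  have hqfun : q = fun t => ((deriv r t) ^ 2 - 2 * r t * deriv (deriv r) t) / (4 * r t ^ 2) := by
    funext t
    rw [hq t, show iteratedDeriv 2 r = deriv (deriv r) by
      rw [show (2:ℕ) = 1 + 1 from rfl, iteratedDeriv_succ, iteratedDeriv_one]]
  have hqC : ContDiff ℝ (⊤ : ℕ∞) q := by
    rw [hqfun]; exact ContDiff.div (by fun_prop) (by fun_prop) hden
  have hqd : Differentiable ℝ q := hqC.differentiable (by simp)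
  have hq1C : ContDiff ℝ (⊤ : ℕ∞) (deriv q) := (contDiff_infty_iff_deriv.mp hqC).2
  have hq1d : Differentiable ℝ (deriv q) := hq1C.differentiable (by simp)
  -- first derivative of q
  have hq1 : ∀ t, deriv q t =
      (2 * r t * deriv r t * deriv (deriv r) t - r t ^ 2 * deriv (deriv (deriv r)) t
        - (deriv r t) ^ 3) / (2 * r t ^ 3) := by
    intro t
    rw [hqfun, deriv_fun_div (c := fun u => (deriv r u) ^ 2 - 2 * r u * deriv (deriv r) u)
      (d := fun u => 4 * r u ^ 2) (by fun_prop) (by fun_prop) (hden t)]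
    simp (disch := fun_prop) only [deriv_fun_add, deriv_fun_sub, deriv_fun_mul, deriv_fun_pow,
      deriv_const_mul_field', deriv_const']
    have h0 := hr0 t
    field_simp
    ring
  -- second derivative of q at x
  have hq2 : deriv (deriv q) x =
      (3 * (deriv r x) ^ 4 + 2 * r x ^ 2 * (deriv (deriv r) x) ^ 2
        + 3 * r x ^ 2 * deriv r x * deriv (deriv (deriv r)) x
        - r x ^ 3 * deriv (deriv (deriv (deriv r))) x
        - 7 * r x * (deriv r x) ^ 2 * deriv (deriv r) x) / (2 * r x ^ 4) := by
    have h : deriv q = fun t =>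
        (2 * r t * deriv r t * deriv (deriv r) t - r t ^ 2 * deriv (deriv (deriv r)) t
          - (deriv r t) ^ 3) / (2 * r t ^ 3) := funext hq1
    rw [h, deriv_fun_div (c := fun u => 2 * r u * deriv r u * deriv (deriv r) u
        - r u ^ 2 * deriv (deriv (deriv r)) u - (deriv r u) ^ 3)
      (d := fun u => 2 * r u ^ 3) (by fun_prop) (by fun_prop)
      (mul_ne_zero (by norm_num) (pow_ne_zero _ (hr0 x)))]
    simp (disch := fun_prop) only [deriv_fun_add, deriv_fun_sub, deriv_fun_mul, deriv_fun_pow,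
      deriv_const_mul_field', deriv_const']
    have h0 := hr0 x
    field_simp
    ring
  -- expand the iterate
  have hP1 : Psi r (fun t => -(3 / 2) * deriv r t) y
      = fun t => r t * deriv y t + -(3 / 2) * deriv r t * y t := rfl
  have hP2 : Psi r (fun t => -(3 / 2) * deriv r t)
        (fun t => r t * deriv y t + -(3 / 2) * deriv r t * y t)
      = fun t => 9/4 * (deriv r t) ^ 2 * y t - 3/2 * r t * deriv (deriv r) t * y t
          - 2 * r t * deriv r t * deriv y t + r t ^ 2 * deriv (deriv y) t := by
    funext t
    simp only [Psi]
    simp (disch := fun_prop) only [deriv_fun_add, deriv_fun_sub, deriv_fun_mul, deriv_fun_pow,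
      deriv_const_mul_field', deriv_const']
    ring
  have hP3 : Psi r (fun t => -(3 / 2) * deriv r t)
        (fun t => 9/4 * (deriv r t) ^ 2 * y t - 3/2 * r t * deriv (deriv r) t * y t
          - 2 * r t * deriv r t * deriv y t + r t ^ 2 * deriv (deriv y) t)
      = fun t => -(27/8) * (deriv r t) ^ 3 * y t
          + 21/4 * r t * deriv r t * deriv (deriv r) t * y t
          + 13/4 * r t * (deriv r t) ^ 2 * deriv y t
          - 3/2 * r t ^ 2 * deriv (deriv (deriv r)) t * y t
          - 7/2 * r t ^ 2 * deriv (deriv r) t * deriv y t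
          - 3/2 * r t ^ 2 * deriv r t * deriv (deriv y) t
          + r t ^ 3 * deriv (deriv (deriv y)) t := by
    funext t
    simp only [Psi]
    simp (disch := fun_prop) only [deriv_fun_add, deriv_fun_sub, deriv_fun_mul, deriv_fun_pow,
      deriv_const_mul_field', deriv_const']
    ring
  have hP4 : Psi r (fun t => -(3 / 2) * deriv r t)
        (fun t => -(27/8) * (deriv r t) ^ 3 * y t
          + 21/4 * r t * deriv r t * deriv (deriv r) t * y t
          + 13/4 * r t * (deriv r t) ^ 2 * deriv y t
          - 3/2 * r t ^ 2 * deriv (deriv (deriv r)) t * y t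
          - 7/2 * r t ^ 2 * deriv (deriv r) t * deriv y t
          - 3/2 * r t ^ 2 * deriv r t * deriv (deriv y) t
          + r t ^ 3 * deriv (deriv (deriv y)) t) x
      = 81/16 * (deriv r x) ^ 4 * y x
          - 51/4 * r x * (deriv r x) ^ 2 * deriv (deriv r) x * y x
          - 5 * r x * (deriv r x) ^ 3 * deriv y x
          + 21/4 * r x ^ 2 * (deriv (deriv r) x) ^ 2 * y x
          + 9/2 * r x ^ 2 * deriv r x * deriv (deriv (deriv r)) x * y x
          + 10 * r x ^ 2 * deriv r x * deriv (deriv r) x * deriv y x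
          + 5/2 * r x ^ 2 * (deriv r x) ^ 2 * deriv (deriv y) x
          - 3/2 * r x ^ 3 * deriv (deriv (deriv (deriv r))) x * y x
          - 5 * r x ^ 3 * deriv (deriv (deriv r)) x * deriv y x
          - 5 * r x ^ 3 * deriv (deriv r) x * deriv (deriv y) x
          + r x ^ 4 * deriv (deriv (deriv (deriv y))) x := by
    simp only [Psi]
    simp (disch := fun_prop) only [deriv_fun_add, deriv_fun_sub, deriv_fun_mul, deriv_fun_pow,
      deriv_const_mul_field', deriv_const']
    ring
  have hID4 : iteratedDeriv 4 y = deriv (deriv (deriv (deriv y))) := by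
    rw [show (4:ℕ) = 3 + 1 from rfl, iteratedDeriv_succ,
      show (3:ℕ) = 2 + 1 from rfl, iteratedDeriv_succ,
      show (2:ℕ) = 1 + 1 from rfl, iteratedDeriv_succ, iteratedDeriv_one]
  have hID2 : iteratedDeriv 2 y = deriv (deriv y) := by
    rw [show (2:ℕ) = 1 + 1 from rfl, iteratedDeriv_succ, iteratedDeriv_one]
  have hIDq2 : iteratedDeriv 2 q = deriv (deriv q) := by
    rw [show (2:ℕ) = 1 + 1 from rfl, iteratedDeriv_succ, iteratedDeriv_one]
  have hqx : q x = ((deriv r x) ^ 2 - 2 * r x * deriv (deriv r) x) / (4 * r x ^ 2) := by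
    rw [hqfun]
  rw [show (4:ℕ) = 3 + 1 from rfl, Function.iterate_succ_apply,
    show (3:ℕ) = 2 + 1 from rfl, Function.iterate_succ_apply,
    Function.iterate_succ_apply (n := 1), Function.iterate_one]
  rw [hP1, hP2, hP3, hP4, hID4, hID2, hIDq2, hqx, hq1 x, hq2]
  have h0 := hr0 x
  field_simp
  ring
end

section
/- Let q : ℝ → ℝ be smooth and let u, v : ℝ → ℝ be smooth solutions of the second-order source equation y'' + q y = 0 (i.e., u'' + q u = 0 and v'' + q v = 0). Fix an integer n ≥ 1 and let Ψ be the operator (Ψ y) = u² y' − (n−1) u u' y. Then for every integer j with 0 ≤ j ≤ n−1, the function u^{n−1−j} v^{j} satisfies Ψ^n [ u^{n−1−j} v^{j} ] = 0. Consequently every linear combination Σ_{j=1}^{n} C_j u^{n−j} v^{j−1} with constants C_j is a solution of the n-th order iterative equation Ψ^n[y] = 0. -/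
section Aux

variable (u v : ℝ → ℝ)

/-- The key one-step computation: `Ψ[A u^a v^b] = (A b c) u^(a+1) v^(b-1)` when
`a + b = n - 1`, where `c` is the (constant) Wronskian. -/
lemma psi_key (hud : Differentiable ℝ u) (hvd : Differentiable ℝ v)
    (n : ℕ) (hn : 1 ≤ n) (c : ℝ)
    (hc : ∀ x, u x * deriv v x - v x * deriv u x = c)
    (A : ℝ) (a b : ℕ) (hab : a + b = n - 1) (x : ℝ) :
    Psi (fun t => u t ^ 2) (fun t => -((n : ℝ) - 1) * u t * deriv u t)
        (fun t => A * u t ^ a * v t ^ b) x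
      = (A * b * c) * u x ^ (a + 1) * v x ^ (b - 1) := by
  have hD : HasDerivAt (fun t => A * u t ^ a * v t ^ b)
      ((A * ((a : ℝ) * u x ^ (a - 1) * deriv u x)) * v x ^ b
        + (A * u x ^ a) * ((b : ℝ) * v x ^ (b - 1) * deriv v x)) x := by
    exact (((hud x).hasDerivAt.pow a).const_mul A).mul ((hvd x).hasDerivAt.pow b)
  have hcast : (a : ℝ) + (b : ℝ) = (n : ℝ) - 1 := by
    have : a + b + 1 = n := by omega
    have := congrArg (fun m : ℕ => (m : ℝ)) this
    push_cast at this
    linarith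
  simp only [Psi, hD.deriv]
  rw [← hc x]
  rcases Nat.eq_zero_or_pos b with hb | hb
  · subst hb
    rcases Nat.eq_zero_or_pos a with ha | ha
    · have hn1 : (n : ℝ) - 1 = 0 := by
        subst ha; push_cast at hcast; linarith
      subst ha
      simp [hn1]
    · obtain ⟨d, rfl⟩ : ∃ d, a = d + 1 := ⟨a - 1, by omega⟩
      have han : (d : ℝ) + 1 = (n : ℝ) - 1 := by push_cast at hcast ⊢; linarith
      simp only [Nat.cast_zero, pow_zero, Nat.add_sub_cancel, Nat.zero_sub]
      push_cast
      linear_combination (A * deriv u x * u x ^ (d + 2)) * han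
  · obtain ⟨m, rfl⟩ : ∃ m, b = m + 1 := ⟨b - 1, by omega⟩
    have hvb : v x ^ (m + 1) = v x ^ m * v x := by rw [pow_succ]
    have hbm : (m + 1 : ℕ) - 1 = m := by omega
    rw [hbm]
    rcases Nat.eq_zero_or_pos a with ha | ha
    · subst ha
      have hn1 : (n : ℝ) - 1 = (m : ℝ) + 1 := by
        simpa using hcast.symm
      simp only [pow_zero, pow_one, Nat.cast_add, Nat.cast_one, Nat.cast_zero] at *
      rw [hvb, hn1]
      ring
    · obtain ⟨d, rfl⟩ : ∃ d, a = d + 1 := ⟨a - 1, by omega⟩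
      have han : (d : ℝ) + 1 + ((m : ℝ) + 1) = (n : ℝ) - 1 := by
        push_cast at hcast ⊢; linarith
      simp only [Nat.add_sub_cancel]
      push_cast
      linear_combination (A * deriv u x * u x ^ (d + 2) * v x ^ (m + 1)) * han

end Aux

/-- If `u, v` solve the source equation `y'' + q y = 0` and `Ψ` is the operator with
source parameters `r = u²`, `s = -(n-1) u u'`, then each `u^{n-1-j} v^j`
(`0 ≤ j ≤ n-1`) is annihilated by `Ψ^n`, and consequently so is every superposition
`Σ_{j=1}^{n} C_j u^{n-j} v^{j-1}`. -/
theorem stmt7 (q u v : ℝ → ℝ) (hq : ContDiff ℝ (⊤ : ℕ∞) q)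
    (hu : ContDiff ℝ (⊤ : ℕ∞) u) (hv : ContDiff ℝ (⊤ : ℕ∞) v)
    (hueq : ∀ x, iteratedDeriv 2 u x + q x * u x = 0)
    (hveq : ∀ x, iteratedDeriv 2 v x + q x * v x = 0)
    (n : ℕ) (hn : 1 ≤ n) :
    (∀ j : ℕ, j ≤ n - 1 → ∀ x : ℝ,
        (Psi (fun t => u t ^ 2) (fun t => -((n : ℝ) - 1) * u t * deriv u t))^[n]
          (fun t => u t ^ (n - 1 - j) * v t ^ j) x = 0) ∧
    (∀ C : ℕ → ℝ, ∀ x : ℝ,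
        (Psi (fun t => u t ^ 2) (fun t => -((n : ℝ) - 1) * u t * deriv u t))^[n]
          (fun t => ∑ j ∈ Finset.Icc 1 n, C j * u t ^ (n - j) * v t ^ (j - 1)) x = 0) := by
  have hud : Differentiable ℝ u := hu.differentiable (by simp)
  have hvd : Differentiable ℝ v := hv.differentiable (by simp)
  have hud' : Differentiable ℝ (deriv u) := by
    have h2 : ContDiff ℝ 2 u := hu.of_le (by exact WithTop.coe_le_coe.mpr (le_top : (2 : ℕ∞) ≤ ⊤))
    exact ((contDiff_succ_iff_deriv (n := 1)).mp h2).2.2.differentiable (by simp)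
  have hvd' : Differentiable ℝ (deriv v) := by
    have h2 : ContDiff ℝ 2 v := hv.of_le (by exact WithTop.coe_le_coe.mpr (le_top : (2 : ℕ∞) ≤ ⊤))
    exact ((contDiff_succ_iff_deriv (n := 1)).mp h2).2.2.differentiable (by simp)
  have hu2 : ∀ x, deriv (deriv u) x = -(q x * u x) := by
    intro x
    have := hueq x
    rw [iteratedDeriv_succ, iteratedDeriv_one] at this
    linarith
  have hv2 : ∀ x, deriv (deriv v) x = -(q x * v x) := by
    intro x
    have := hveq x
    rw [iteratedDeriv_succ, iteratedDeriv_one] at this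
    linarith
  -- the Wronskian is constant
  set W : ℝ → ℝ := fun x => u x * deriv v x - v x * deriv u x with hW
  have hWd : Differentiable ℝ W := (hud.mul hvd').sub (hvd.mul hud')
  have hWderiv : ∀ x, deriv W x = 0 := by
    intro x
    have h1 : HasDerivAt W
        (deriv u x * deriv v x + u x * deriv (deriv v) x
          - (deriv v x * deriv u x + v x * deriv (deriv u) x)) x := by
      rw [hW]
      exact ((hud x).hasDerivAt.mul (hvd' x).hasDerivAt).sub
        ((hvd x).hasDerivAt.mul (hud' x).hasDerivAt)
    rw [h1.deriv, hu2 x, hv2 x]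
    ring
  set c : ℝ := W 0 with hcdef
  have hc : ∀ x, u x * deriv v x - v x * deriv u x = c := fun x =>
    is_const_of_deriv_eq_zero hWd hWderiv x 0
  set Ψ := Psi (fun t => u t ^ 2) (fun t => -((n : ℝ) - 1) * u t * deriv u t) with hΨ
  have key := psi_key u v hud hvd n hn c hc
  -- iterates of a single monomial term
  have iter1 : ∀ (A : ℝ) (j : ℕ), j ≤ n - 1 → ∀ k : ℕ,
      ∃ B : ℝ, ∃ a b : ℕ, a + b = n - 1 ∧ b = j - k ∧ (j < k → B = 0) ∧
        Ψ^[k] (fun t => A * u t ^ (n - 1 - j) * v t ^ j)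
          = fun t => B * u t ^ a * v t ^ b := by
    intro A j hj k
    induction k with
    | zero => exact ⟨A, n - 1 - j, j, by omega, by omega, by omega, rfl⟩
    | succ k ih =>
      obtain ⟨B, a, b, hab, hbk, hB0, hfun⟩ := ih
      refine ⟨B * b * c, if b = 0 then n - 1 else a + 1, b - 1, ?_, by omega, ?_, ?_⟩
      · split <;> omega
      · intro hjk
        rcases Nat.lt_or_ge j k with h | h
        · rw [hB0 h]; ring
        · have : b = 0 := by omega
          rw [this]; simp
      · rw [Function.iterate_succ_apply', hfun]
        funext x
        rw [hΨ, key B a b hab x]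
        rcases Nat.eq_zero_or_pos b with hb | hb
        · subst hb; simp
        · rw [if_neg (by omega)]
  -- iterates of the superposition
  have iter2 : ∀ (C : ℕ → ℝ) (k : ℕ),
      ∃ B : ℕ → ℝ, ∃ a b : ℕ → ℕ,
        (∀ j ∈ Finset.Icc 1 n, a j + b j = n - 1 ∧ b j = (j - 1) - k ∧
          (j - 1 < k → B j = 0)) ∧
        Ψ^[k] (fun t => ∑ j ∈ Finset.Icc 1 n, C j * u t ^ (n - j) * v t ^ (j - 1))
          = fun t => ∑ j ∈ Finset.Icc 1 n, B j * u t ^ (a j) * v t ^ (b j) := by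
    intro C k
    induction k with
    | zero =>
      refine ⟨C, fun j => n - j, fun j => j - 1, ?_, rfl⟩
      intro j hj
      simp only [Finset.mem_Icc] at hj
      refine ⟨?_, ?_, ?_⟩
      · show n - j + (j - 1) = n - 1
        omega
      · show j - 1 = (j - 1) - 0
        omega
      · intro h
        exact absurd (show j - 1 < 0 from h) (by omega)
    | succ k ih =>
      obtain ⟨B, a, b, hprop, hfun⟩ := ih
      refine ⟨fun j => B j * b j * c,
        fun j => if b j = 0 then n - 1 else a j + 1,
        fun j => b j - 1, ?_, ?_⟩
      · intro j hj
        obtain ⟨h1, h2, h3⟩ := hprop j hj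
        refine ⟨?_, ?_, ?_⟩
        · show (if b j = 0 then n - 1 else a j + 1) + (b j - 1) = n - 1
          split <;> omega
        · show b j - 1 = (j - 1) - (k + 1)
          omega
        · intro hjk
          show B j * (b j : ℝ) * c = 0
          rcases Nat.lt_or_ge (j - 1) k with h | h
          · rw [h3 h]; ring
          · have hbj : b j = 0 := by omega
            rw [hbj]; simp
      · rw [Function.iterate_succ_apply', hfun]
        funext x
        have hdiff : ∀ j ∈ Finset.Icc 1 n,
            DifferentiableAt ℝ (fun t => B j * u t ^ (a j) * v t ^ (b j)) x :=
          fun j _ => (((hud x).pow _).const_mul (B j)).mul ((hvd x).pow _)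
        have hsum : Ψ (fun t => ∑ j ∈ Finset.Icc 1 n, B j * u t ^ (a j) * v t ^ (b j)) x
            = ∑ j ∈ Finset.Icc 1 n,
                Ψ (fun t => B j * u t ^ (a j) * v t ^ (b j)) x := by
          simp only [hΨ, Psi]
          rw [deriv_fun_sum hdiff, Finset.mul_sum, Finset.mul_sum, ← Finset.sum_add_distrib]
        rw [hsum]
        refine Finset.sum_congr rfl ?_
        intro j hj
        obtain ⟨h1, _, _⟩ := hprop j hj
        show Ψ (fun t => B j * u t ^ (a j) * v t ^ (b j)) x
          = (B j * (b j : ℝ) * c) * u x ^ (if b j = 0 then n - 1 else a j + 1)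
            * v x ^ (b j - 1)
        rw [hΨ, key (B j) (a j) (b j) h1 x]
        rcases Nat.eq_zero_or_pos (b j) with hb | hb
        · rw [hb]; simp
        · rw [if_neg (by omega)]
  constructor
  · intro j hj x
    obtain ⟨B, a, b, hab, hbk, hB0, hfun⟩ := iter1 1 j hj n
    have hB : B = 0 := hB0 (by omega)
    have heq : (fun t => u t ^ (n - 1 - j) * v t ^ j)
        = fun t => (1 : ℝ) * u t ^ (n - 1 - j) * v t ^ j := by
      funext t; rw [one_mul]
    rw [heq, hfun, hB]
    simp
  · intro C x
    obtain ⟨B, a, b, hprop, hfun⟩ := iter2 C n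
    rw [hfun]
    refine Finset.sum_eq_zero ?_
    intro j hj
    obtain ⟨_, _, h3⟩ := hprop j hj
    simp only [Finset.mem_Icc] at hj
    rw [h3 (by omega)]
    ring
end

section
/- Let q : ℝ → ℝ be smooth, let u : ℝ → ℝ be a smooth solution of u'' + q u = 0 with u(x) ≠ 0 for all x, and let F : ℝ → ℝ be smooth with F'(x) = 1 / u(x)² for all x. Fix an integer n ≥ 1 and let Ψ be the operator (Ψ y) = u² y' − (n−1) u u' y. Then for every integer j with 0 ≤ j ≤ n−1, the function u^{n−1} F^{j} satisfies Ψ^n [ u^{n−1} F^{j} ] = 0. In particular, the general superposition w = u^{n−1} Σ_{j=0}^{n−1} C_j F^{j} with constants C_j solves the n-th order iterative equation, so a single nonzero solution of the source equation suffices to produce solutions of the iterative equation of every order. -/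
/-- If `u` is a nonvanishing solution of `u'' + q u = 0`, `F` is an antiderivative of
`1/u²`, and `Ψ` is the operator with source parameters `r = u²`, `s = -(n-1) u u'`,
then each `u^{n-1} F^j` (`0 ≤ j ≤ n-1`) is annihilated by `Ψ^n`; in particular every
superposition `u^{n-1} Σ_{j=0}^{n-1} C_j F^j` solves the `n`-th order iterative
equation. -/
theorem stmt8 (q u F : ℝ → ℝ) (hq : ContDiff ℝ (⊤ : ℕ∞) q)
    (hu : ContDiff ℝ (⊤ : ℕ∞) u) (hF : ContDiff ℝ (⊤ : ℕ∞) F)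
    (hu0 : ∀ x, u x ≠ 0)
    (hueq : ∀ x, iteratedDeriv 2 u x + q x * u x = 0)
    (hFeq : ∀ x, deriv F x = 1 / u x ^ 2)
    (n : ℕ) (hn : 1 ≤ n) :
    (∀ j : ℕ, j ≤ n - 1 → ∀ x : ℝ,
        (Psi (fun t => u t ^ 2) (fun t => -((n : ℝ) - 1) * u t * deriv u t))^[n]
          (fun t => u t ^ (n - 1) * F t ^ j) x = 0) ∧
    (∀ C : ℕ → ℝ, ∀ x : ℝ,
        (Psi (fun t => u t ^ 2) (fun t => -((n : ℝ) - 1) * u t * deriv u t))^[n]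
          (fun t => u t ^ (n - 1) * ∑ j ∈ Finset.range n, C j * F t ^ j) x = 0) := by
  have hud : Differentiable ℝ u := hu.differentiable (by simp)
  have hFd : Differentiable ℝ F := hF.differentiable (by simp)
  set m : ℕ := n - 1 with hm
  have hmn : (n : ℝ) - 1 = (m : ℝ) := by
    rw [hm]; push_cast [Nat.cast_sub hn]; ring
  clear_value m
  set P : (ℝ → ℝ) → ℝ → ℝ :=
    Psi (fun t => u t ^ 2) (fun t => -((n : ℝ) - 1) * u t * deriv u t) with hP
  set g : ℕ → ℝ → ℝ := fun j t => u t ^ m * F t ^ j with hg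
  have hgdiff : ∀ j, Differentiable ℝ (g j) := fun j => (hud.pow m).mul (hFd.pow j)
  have hgderiv : ∀ j x, HasDerivAt (g j)
      ((m : ℝ) * u x ^ (m-1) * deriv u x * (F x ^ j)
        + u x ^ m * ((j : ℝ) * F x ^ (j-1) * deriv F x)) x :=
    fun j x => ((hud x).hasDerivAt.pow m).mul ((hFd x).hasDerivAt.pow j)
  -- key step: P (g j) = j • g (j-1)
  have keyA : ∀ j, P (g j) = fun x => (j : ℝ) * g (j-1) x := by
    intro j
    funext x
    have hx := hu0 x
    simp only [hP, Psi, (hgderiv j x).deriv]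
    simp only [hg, hmn, hFeq x]
    rcases Nat.eq_zero_or_pos m with hm0 | hm1
    · subst hm0
      field_simp
      simp
    · obtain ⟨m', rfl⟩ := Nat.exists_eq_add_of_le hm1
      simp only [Nat.add_sub_cancel_left, Nat.add_sub_cancel]
      push_cast
      field_simp
      ring
  have keyS : ∀ (c : ℝ) (j : ℕ), P (fun x => c * g j x) = fun x => c * P (g j) x := by
    intro c j
    funext x
    simp only [hP, Psi]
    rw [deriv_const_mul _ ((hgdiff j) x)]
    ring
  -- iterated action
  have keyC : ∀ k j, P^[k] (g j)
      = fun x => (∏ i ∈ Finset.range k, ((j : ℝ) - i)) * g (j - k) x := by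
    intro k
    induction k with
    | zero => intro j; simp
    | succ k ih =>
      intro j
      rw [Function.iterate_succ_apply', ih j, keyS, keyA]
      funext x
      rw [Finset.prod_range_succ]
      rcases le_or_gt k j with h | h
      · have : ((j - k : ℕ) : ℝ) = (j : ℝ) - k := by push_cast [Nat.cast_sub h]; ring
        rw [Nat.sub_sub]
        rw [this]; ring
      · have h1 : j - k = 0 := Nat.sub_eq_zero_of_le h.le
        have h2 : (∏ i ∈ Finset.range k, ((j : ℝ) - i)) = 0 := by
          apply Finset.prod_eq_zero (Finset.mem_range.mpr h)
          simp
        simp [h1, h2]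
  have hjlt : ∀ j : ℕ, j ≤ n - 1 → (∏ i ∈ Finset.range n, ((j : ℝ) - i)) = 0 := by
    intro j hj
    apply Finset.prod_eq_zero (Finset.mem_range.mpr (lt_of_le_of_lt hj (Nat.sub_lt hn one_pos)))
    simp
  constructor
  · intro j hj x
    rw [hm] at hj
    show P^[n] (g j) x = 0
    rw [keyC n j]
    simp [hjlt j hj]
  · intro C x
    -- sum linearity
    have keySum : ∀ (a : ℕ → ℝ) (h : ℕ → ℕ),
        P (fun x => ∑ j ∈ Finset.range n, a j * g (h j) x)
          = fun x => ∑ j ∈ Finset.range n, a j * P (g (h j)) x := by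
      intro a h
      funext x
      have hd : HasDerivAt (fun x => ∑ j ∈ Finset.range n, a j * g (h j) x)
          (∑ j ∈ Finset.range n, a j * deriv (g (h j)) x) x :=
        HasDerivAt.fun_sum fun j _ => ((hgdiff (h j) x).hasDerivAt).const_mul (a j)
      simp only [hP, Psi, hd.deriv, Finset.mul_sum, ← Finset.sum_add_distrib]
      exact Finset.sum_congr rfl fun j _ => by ring
    have keyIter : ∀ k, P^[k] (fun x => ∑ j ∈ Finset.range n, C j * g j x)
        = fun x => ∑ j ∈ Finset.range n, C j * (P^[k] (g j) x) := by
      intro k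
      induction k with
      | zero => simp
      | succ k ih =>
        rw [Function.iterate_succ_apply', ih]
        have e1 : (fun x => ∑ j ∈ Finset.range n, C j * (P^[k] (g j) x))
            = fun x => ∑ j ∈ Finset.range n,
                (C j * (∏ i ∈ Finset.range k, ((j : ℝ) - i))) * g (j - k) x := by
          funext x
          exact Finset.sum_congr rfl fun j _ => by rw [keyC k j]; ring
        rw [e1, keySum]
        funext x
        refine Finset.sum_congr rfl fun j _ => ?_
        rw [Function.iterate_succ_apply', keyC k j, keyS]
        ring
    have hw : (fun t => u t ^ m * ∑ j ∈ Finset.range n, C j * F t ^ j)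
        = fun t => ∑ j ∈ Finset.range n, C j * g j t := by
      funext t
      rw [Finset.mul_sum]
      exact Finset.sum_congr rfl fun j _ => by simp only [hg]; ring
    show P^[n] (fun t => u t ^ m * ∑ j ∈ Finset.range n, C j * F t ^ j) x = 0
    rw [hw, keyIter n]
    refine Finset.sum_eq_zero fun j hj => ?_
    rw [keyC n j]
    have : (∏ i ∈ Finset.range n, ((j : ℝ) - i)) = 0 := by
      apply Finset.prod_eq_zero (by simpa using hj)
      simp
    simp [this]
end

section
/- Let u, v : ℝ → ℝ be differentiable functions and suppose there exists a point x₀ ∈ ℝ at which the Wronskian u v' − u' v does not vanish: u(x₀) v'(x₀) − u'(x₀) v(x₀) ≠ 0. Then for every integer n ≥ 1, the n functions u^{n−1}, u^{n−2} v, …, u v^{n−2}, v^{n−1} (i.e., u^{n−1−j} v^{j} for j = 0, …, n−1) are linearly independent over ℝ as functions ℝ → ℝ. -/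
open Polynomial

lemma key_inf (u v : ℝ → ℝ) (hu : Differentiable ℝ u) (hv : Differentiable ℝ v)
    (x₀ : ℝ) (hW : u x₀ * deriv v x₀ - deriv u x₀ * v x₀ ≠ 0) (hu0 : u x₀ ≠ 0) :
    {t : ℝ | ∃ x, u x ≠ 0 ∧ v x = t * u x}.Infinite := by
  obtain ⟨δ, hδ, hball⟩ := Metric.isOpen_iff.1 (isOpen_compl_singleton.preimage hu.continuous)
    x₀ (by simpa using hu0)
  set I := Metric.ball x₀ δ with hI
  have hIne : ∀ x ∈ I, u x ≠ 0 := fun x hx => by simpa using hball hx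
  set f : ℝ → ℝ := fun x => v x / u x with hf
  have hfc : ContinuousOn f I :=
    (hv.continuous.continuousOn.div hu.continuous.continuousOn hIne)
  have hmono : f '' I ⊆ {t : ℝ | ∃ x, u x ≠ 0 ∧ v x = t * u x} := by
    rintro t ⟨x, hx, rfl⟩
    exact ⟨x, hIne x hx, (div_mul_cancel₀ _ (hIne x hx)).symm⟩
  refine Set.Infinite.mono hmono ?_
  -- f is not constant on I
  have hder : HasDerivAt f ((deriv v x₀ * u x₀ - v x₀ * deriv u x₀) / (u x₀)^2) x₀ :=
    ((hv x₀).hasDerivAt).div ((hu x₀).hasDerivAt) hu0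
  have hdne : (deriv v x₀ * u x₀ - v x₀ * deriv u x₀) / (u x₀)^2 ≠ 0 := by
    apply div_ne_zero _ (pow_ne_zero _ hu0)
    intro h; apply hW; linarith
  have hx₀I : x₀ ∈ I := Metric.mem_ball_self hδ
  have : ∃ a ∈ I, f a ≠ f x₀ := by
    by_contra h
    push_neg at h
    have heq : f =ᶠ[nhds x₀] (fun _ => f x₀) := by
      filter_upwards [Metric.ball_mem_nhds x₀ hδ] with a ha using h a ha
    have : deriv f x₀ = 0 := by
      rw [Filter.EventuallyEq.deriv_eq heq]; simp
    rw [hder.deriv] at this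
    exact hdne this
  obtain ⟨a, haI, hane⟩ := this
  have hsub : Set.uIcc a x₀ ⊆ I := ((convex_ball x₀ δ).ordConnected).uIcc_subset haI hx₀I
  have him : Set.uIcc (f a) (f x₀) ⊆ f '' Set.uIcc a x₀ :=
    intermediate_value_uIcc (hfc.mono hsub)
  have hinf : (Set.uIcc (f a) (f x₀)).Infinite := by
    rw [Set.uIcc]
    exact Set.Icc_infinite (by simp [inf_lt_sup, hane, hane.symm])
  exact hinf.mono (him.trans (Set.image_mono hsub))

lemma li_aux (u v : ℝ → ℝ) (hu : Differentiable ℝ u) (hv : Differentiable ℝ v)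
    (x₀ : ℝ) (hW : u x₀ * deriv v x₀ - deriv u x₀ * v x₀ ≠ 0) (hu0 : u x₀ ≠ 0)
    (n : ℕ) (hn : 1 ≤ n) :
    LinearIndependent ℝ
      (fun j : Fin n => (fun x => u x ^ (n - 1 - (j : ℕ)) * v x ^ (j : ℕ) : ℝ → ℝ)) := by
  rw [Fintype.linearIndependent_iff]
  intro c hc j
  set Q : Polynomial ℝ := ∑ i : Fin n, C (c i) * X ^ (i : ℕ) with hQ
  have hQ0 : Q = 0 := by
    apply Polynomial.eq_zero_of_infinite_isRoot
    apply Set.Infinite.mono _ (key_inf u v hu hv x₀ hW hu0)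
    rintro t ⟨x, hx, hvx⟩
    have hcx : ∑ i : Fin n, c i * (u x ^ (n - 1 - (i : ℕ)) * v x ^ (i : ℕ)) = 0 := by
      have := congrFun hc x
      simpa [Finset.sum_apply] using this
    have hterm : ∀ i : Fin n, c i * (u x ^ (n - 1 - (i : ℕ)) * v x ^ (i : ℕ))
        = (c i * t ^ (i : ℕ)) * u x ^ (n - 1) := by
      intro i
      have hile : (i : ℕ) ≤ n - 1 := Nat.le_sub_one_of_lt i.2
      have hpow : u x ^ (n - 1 - (i : ℕ)) * u x ^ (i : ℕ) = u x ^ (n - 1) := by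
        rw [← pow_add, Nat.sub_add_cancel hile]
      rw [hvx, mul_pow, ← hpow]; ring
    rw [Finset.sum_congr rfl (fun i _ => hterm i), ← Finset.sum_mul] at hcx
    have hsum : ∑ i : Fin n, c i * t ^ (i : ℕ) = 0 :=
      (mul_eq_zero.1 hcx).resolve_right (pow_ne_zero _ hx)
    simp only [Set.mem_setOf_eq, IsRoot, hQ, Polynomial.eval_finset_sum]
    simpa using hsum
  have : Q.coeff j = c j := by
    simp [hQ, Polynomial.finset_sum_coeff, Polynomial.coeff_C_mul, Polynomial.coeff_X_pow,
      Fin.val_inj]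
  rw [hQ0] at this
  simpa using this.symm

/-- If the Wronskian `u v' - u' v` of two differentiable functions `u, v : ℝ → ℝ` is
nonzero at some point `x₀`, then for every `n ≥ 1` the `n` functions
`u^{n-1-j} v^j`, `j = 0, …, n-1`, are linearly independent over `ℝ`. -/
theorem stmt9 (u v : ℝ → ℝ) (hu : Differentiable ℝ u) (hv : Differentiable ℝ v)
    (x₀ : ℝ) (hW : u x₀ * deriv v x₀ - deriv u x₀ * v x₀ ≠ 0)
    (n : ℕ) (hn : 1 ≤ n) :
    LinearIndependent ℝ
      (fun j : Fin n => (fun x => u x ^ (n - 1 - (j : ℕ)) * v x ^ (j : ℕ) : ℝ → ℝ)) := by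
  by_cases hu0 : u x₀ ≠ 0
  · exact li_aux u v hu hv x₀ hW hu0 n hn
  · push_neg at hu0
    have hv0 : v x₀ ≠ 0 := by
      intro h; apply hW; rw [hu0, h]; ring
    have hW' : v x₀ * deriv u x₀ - deriv v x₀ * u x₀ ≠ 0 := by
      intro h; apply hW; linarith
    have h := (li_aux v u hv hu x₀ hW' hv0 n hn).comp Fin.rev Fin.rev_injective
    convert h using 1
    funext j
    funext x
    have hj : (j : ℕ) ≤ n - 1 := Nat.le_sub_one_of_lt j.2
    simp only [Function.comp, Fin.val_rev]
    have h1 : n - 1 - ((j : ℕ) + 1 - 1) = n - 1 - (j : ℕ) := by simp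
    have h2 : n - 1 - (n - 1 - (j : ℕ)) = (j : ℕ) := Nat.sub_sub_self hj
    rw [show n - ((j:ℕ) + 1) = n - 1 - (j:ℕ) by omega, h2]
    ring
end
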